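/- For real p > 6, the distance function h(p) defined by cosh²(h(p)) = (h₂₂h₃₃ - h₂₃²)/(h₂₂h₃₃), where h_{ij} are the entries of the inverse of the Coxeter–Schläfli matrix C(p), is strictly decreasing in p, and h(p) → 0 as p → ∞. -/

import Mathlib

/-
With `c = cos (π / p)` the Coxeter–Schläfli matrix inverts explicitly, and the defining ratio
collapses to `cosh² h(p) = (3c² - 2) / (4c² - 3)`. For `p > 6` we have `c² ∈ (3/4, 1]`, increasing
in `p`, on which this ratio is `≥ 1` and strictly decreasing with value `1` at `c² = 1`. Since
`arcosh ∘ √` is increasing and continuous on `[1, ∞)` with value `0` at `1`, `h` decreases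
strictly and tends to `arcosh 1 = 0`.
-/

/-- The inverse hyperbolic cosine, `arcosh x = log (x + √(x² - 1))`. -/
noncomputable def arcosh (x : ℝ) : ℝ := Real.log (x + Real.sqrt (x ^ 2 - 1))

/-- The Coxeter–Schläfli matrix of the simply truncated orthoscheme with essential
dihedral angles `π/p, π/3, π/3`. -/
noncomputable def coxeterSchlafli (p : ℝ) : Matrix (Fin 4) (Fin 4) ℝ :=
  !![1, -Real.cos (Real.pi / p), 0, 0;
     -Real.cos (Real.pi / p), 1, -(1/2 : ℝ), 0;
     0, -(1/2 : ℝ), 1, -(1/2 : ℝ);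
     0, 0, -(1/2 : ℝ), 1]

/-- The height `h(p) ≥ 0` defined by `cosh² h(p) = (h₂₂h₃₃ - h₂₃²)/(h₂₂h₃₃)`,
where `hᵢⱼ` are the entries of the inverse of the Coxeter–Schläfli matrix. -/
noncomputable def hyperballHeight (p : ℝ) : ℝ :=
  arcosh (Real.sqrt
    (((coxeterSchlafli p)⁻¹ 2 2 * (coxeterSchlafli p)⁻¹ 3 3 -
        ((coxeterSchlafli p)⁻¹ 2 3) ^ 2) /
      ((coxeterSchlafli p)⁻¹ 2 2 * (coxeterSchlafli p)⁻¹ 3 3)))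

open Real Set Filter Topology

lemma arcosh_eq_real_arcosh : _root_.arcosh = Real.arcosh := rfl

noncomputable def coxeterSchlafliInv (c : ℝ) : Matrix (Fin 4) (Fin 4) ℝ :=
  (2 - 3 * c ^ 2)⁻¹ •
    !![2, 3 * c, 2 * c, c;
       3 * c, 3, 2, 1;
       2 * c, 2, 4 * (1 - c ^ 2), 2 * (1 - c ^ 2);
       c, 1, 2 * (1 - c ^ 2), 3 - 4 * c ^ 2]

lemma coxeterSchlafli_inv {p : ℝ} (hp : 2 - 3 * cos (π / p) ^ 2 ≠ 0) :
    (coxeterSchlafli p)⁻¹ = coxeterSchlafliInv (cos (π / p)) := by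
  refine Matrix.inv_eq_right_inv ?_
  simp only [coxeterSchlafli, coxeterSchlafliInv]
  generalize cos (π / p) = c at hp
  -- the form in which `simp` leaves the denominator, for `field_simp`
  have hp' : 2 - c ^ 2 * 3 ≠ 0 := by rwa [mul_comm]
  ext i j
  fin_cases i <;> fin_cases j <;>
    simp [Matrix.mul_apply, Fin.sum_univ_four] <;> field_simp <;> ring

/-- `cosh² h(p)` as a function of `t = cos² (π / p)`. -/
noncomputable def heightCoshSq (t : ℝ) : ℝ := (3 * t - 2) / (4 * t - 3)

lemma coshSq_ratio_eq_heightCoshSq {p : ℝ} (h34 : 3 / 4 < cos (π / p) ^ 2)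
    (h1 : cos (π / p) ^ 2 < 1) :
    ((coxeterSchlafli p)⁻¹ 2 2 * (coxeterSchlafli p)⁻¹ 3 3 - ((coxeterSchlafli p)⁻¹ 2 3) ^ 2) /
      ((coxeterSchlafli p)⁻¹ 2 2 * (coxeterSchlafli p)⁻¹ 3 3) =
    heightCoshSq (cos (π / p) ^ 2) := by
  have hd : 2 - 3 * cos (π / p) ^ 2 ≠ 0 := by linarith
  rw [coxeterSchlafli_inv hd]
  simp only [coxeterSchlafliInv, heightCoshSq]
  generalize cos (π / p) ^ 2 = t at *
  have h1t : 1 - t ≠ 0 := by linarith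
  have h43 : 4 * t - 3 ≠ 0 := by linarith
  have h34' : 3 - 4 * t ≠ 0 := by linarith
  simp only [Matrix.smul_apply, Matrix.of_apply, Matrix.cons_val', Matrix.cons_val,
    Matrix.cons_val_fin_one, Matrix.cons_val_one, Matrix.cons_val_zero, smul_eq_mul]
  rw [div_eq_div_iff (by simp [*]) h43]
  field_simp
  ring

lemma strictMonoOn_cos_pi_div : StrictMonoOn (fun p => cos (π / p)) (Ioi 1) := by
  intro p (hp : 1 < p) q (hq : 1 < q) hpq
  have hq_lt_hp : π / q < π / p := div_lt_div_of_pos_left pi_pos (by linarith) hpq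
  have hp_le_pi : π / p ≤ π := div_le_self pi_pos.le hp.le
  exact strictAntiOn_cos ⟨by positivity, hq_lt_hp.le.trans hp_le_pi⟩
    ⟨by positivity, hp_le_pi⟩ hq_lt_hp

lemma strictMonoOn_cos_pi_div_sq : StrictMonoOn (fun p => cos (π / p) ^ 2) (Ici 2) := by
  intro p (hp : 2 ≤ p) q (hq : 2 ≤ q) hpq
  have hcos_nonneg : 0 ≤ cos (π / p) := cos_nonneg_of_neg_pi_div_two_le_of_le
    (by linarith [div_pos pi_pos (by linarith : (0 : ℝ) < p), pi_pos])
    (div_le_div_of_nonneg_left pi_pos.le two_pos hp)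
  exact pow_lt_pow_left₀ (strictMonoOn_cos_pi_div (by simp; linarith) (by simp; linarith) hpq)
    hcos_nonneg two_ne_zero

lemma cos_pi_div_sq_mem_Ioc {p : ℝ} (hp : 6 < p) : cos (π / p) ^ 2 ∈ Ioc (3 / 4) 1 := by
  refine ⟨?_, cos_sq_le_one _⟩
  rw [← sq_cos_pi_div_six]
  exact strictMonoOn_cos_pi_div_sq (by norm_num) (by simp; linarith) hp

lemma strictAntiOn_heightCoshSq : StrictAntiOn heightCoshSq (Ioi (3 / 4)) := by
  intro s (hs : 3 / 4 < s) t (ht : 3 / 4 < t) hst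
  rw [heightCoshSq, heightCoshSq, div_lt_div_iff₀ (by linarith) (by linarith)]
  nlinarith

lemma one_le_heightCoshSq {t : ℝ} (ht : t ∈ Ioc (3 / 4) 1) : 1 ≤ heightCoshSq t := by
  rw [heightCoshSq, one_le_div₀ (by linarith [ht.1])]
  linarith [ht.2]

lemma strictAntiOn_arcosh_sqrt_heightCoshSq :
    StrictAntiOn (fun t => Real.arcosh √(heightCoshSq t)) (Ioc (3 / 4) 1) := by
  intro s hs t ht hst
  have h_one_le : 1 ≤ √(heightCoshSq t) := Real.one_le_sqrt.2 (one_le_heightCoshSq ht)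
  have h_lt : √(heightCoshSq t) < √(heightCoshSq s) :=
    Real.sqrt_lt_sqrt (by linarith [one_le_heightCoshSq ht])
      (strictAntiOn_heightCoshSq hs.1 ht.1 hst)
  exact Real.strictMonoOn_arcosh (one_pos.trans_le h_one_le)
    (one_pos.trans_le (h_one_le.trans h_lt.le)) h_lt

lemma tendsto_arcosh_sqrt_heightCoshSq :
    Tendsto (fun t => Real.arcosh √(heightCoshSq t)) (𝓝[Ioc (3 / 4) 1] 1) (𝓝 0) := by
  have h_one : heightCoshSq 1 = 1 := by norm_num [heightCoshSq]
  have h_cont : ContinuousAt (fun t => √(heightCoshSq t)) 1 :=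
    (ContinuousAt.div (by fun_prop) (by fun_prop) (by norm_num)).sqrt
  have := (Real.continuousOn_arcosh.continuousWithinAt (by simp [h_one])).comp
    h_cont.continuousWithinAt (fun t ht => Real.one_le_sqrt.2 (one_le_heightCoshSq ht))
  simpa [ContinuousWithinAt, Function.comp_def, h_one] using this

lemma tendsto_cos_pi_div_sq : Tendsto (fun p => cos (π / p) ^ 2) atTop (𝓝 1) := by
  have := ((continuous_cos.tendsto 0).comp
    ((tendsto_const_nhds (x := π)).div_atTop tendsto_id)).pow 2
  simpa [Function.comp_def] using this

lemma hyperballHeight_eq {p : ℝ} (hp : 6 < p) :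
    hyperballHeight p = Real.arcosh √(heightCoshSq (cos (π / p) ^ 2)) := by
  have h_ne_one : cos (π / p) ^ 2 < 1 := by
    rw [cos_sq', sub_lt_self_iff]
    exact pow_pos (sin_pos_of_pos_of_lt_pi (by positivity) (div_lt_self pi_pos (by linarith))) 2
  rw [hyperballHeight, coshSq_ratio_eq_heightCoshSq (cos_pi_div_sq_mem_Ioc hp).1 h_ne_one,
    arcosh_eq_real_arcosh]

/-- `h(p)` is strictly decreasing on `(6, ∞)` and tends to `0` as `p → ∞`. -/
theorem hyperballHeight_strictAnti_tendsto_zero :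
    StrictAntiOn hyperballHeight (Set.Ioi 6) ∧
      Filter.Tendsto hyperballHeight Filter.atTop (nhds 0) := by
  have h_mapsTo : MapsTo (fun p => cos (π / p) ^ 2) (Ioi 6) (Ioc (3 / 4) 1) :=
    fun p hp => cos_pi_div_sq_mem_Ioc hp
  constructor
  · intro p hp q hq hpq
    rw [hyperballHeight_eq hp, hyperballHeight_eq hq]
    exact strictAntiOn_arcosh_sqrt_heightCoshSq.comp_strictMonoOn
      (strictMonoOn_cos_pi_div_sq.mono fun x (hx : 6 < x) => show 2 ≤ x by linarith)
      h_mapsTo hp hq hpq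
  · have h_cos : Tendsto (fun p => cos (π / p) ^ 2) atTop (𝓝[Ioc (3 / 4) 1] 1) :=
      tendsto_nhdsWithin_iff.2 ⟨tendsto_cos_pi_div_sq,
        (eventually_gt_atTop 6).mono fun p hp => cos_pi_div_sq_mem_Ioc hp⟩
    refine (tendsto_arcosh_sqrt_heightCoshSq.comp h_cos).congr' ?_
    filter_upwards [eventually_gt_atTop 6] with p hp
    exact (hyperballHeight_eq hp).symm
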